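/- For every continuous function f : Ω → ℝ, if |Kf − f|_∞ ≤ 1 then ‖[D, π(M_f)]‖ ≤ 1. -/

import Mathlib

open MeasureTheory ContinuousLinearMap
open scoped RealInnerProductSpace InnerProductSpace ENNReal

noncomputable section

/-- The shift space `Ω = {0,1}^ℕ`, with `false` playing the role of the symbol `0`
and `true` of the symbol `1`. -/
abbrev Ω : Type := ℕ → Bool

/-- The shift map `σ`, `σ(x)ₙ = x_{n+1}`. -/
def shiftMap : Ω → Ω := fun x n => x (n + 1)

/-- Prepending a symbol: `consSeq a x = ax`. -/
def consSeq (a : Bool) (x : Ω) : Ω := fun n => Nat.casesOn n a (fun k => x k)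

/-- The cylinder set `[w]` of sequences beginning with the finite word `w`. -/
def cylinder (w : List Bool) : Set Ω := {x | ∀ i : Fin w.length, x (i : ℕ) = w.get i}

/-- The Hilbert space `L²(μ)` (real). -/
abbrev E (μ : Measure Ω) := Lp (α := Ω) ℝ 2 μ

/-- The Hilbert space `H = L²(μ) × L²(μ)` with the norm `√(‖φ‖² + ‖ψ‖²)`. -/
abbrev HS (μ : Measure Ω) := WithLp 2 (E μ × E μ)

variable {μ : Measure Ω}

/-- The diagonal block operator `(φ, ψ) ↦ (A₁φ, A₂ψ)` on `H`. -/
def blockDiag (A₁ A₂ : E μ →L[ℝ] E μ) : HS μ →L[ℝ] HS μ :=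
  ((WithLp.prodContinuousLinearEquiv 2 ℝ (E μ) (E μ)).symm.toContinuousLinearMap).comp
    (((A₁.comp (ContinuousLinearMap.fst ℝ (E μ) (E μ))).prod
        (A₂.comp (ContinuousLinearMap.snd ℝ (E μ) (E μ)))).comp
      (WithLp.prodContinuousLinearEquiv 2 ℝ (E μ) (E μ)).toContinuousLinearMap)

/-- The antidiagonal block operator `(φ, ψ) ↦ (A₁ψ, A₂φ)` on `H`. -/
def blockAntidiag (A₁ A₂ : E μ →L[ℝ] E μ) : HS μ →L[ℝ] HS μ :=
  ((WithLp.prodContinuousLinearEquiv 2 ℝ (E μ) (E μ)).symm.toContinuousLinearMap).comp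
    (((A₁.comp (ContinuousLinearMap.snd ℝ (E μ) (E μ))).prod
        (A₂.comp (ContinuousLinearMap.fst ℝ (E μ) (E μ)))).comp
      (WithLp.prodContinuousLinearEquiv 2 ℝ (E μ) (E μ)).toContinuousLinearMap)

/-- The diagonal representation `π(A)(φ,ψ) = (Aφ, Aψ)`. -/
def diagRep (A : E μ →L[ℝ] E μ) : HS μ →L[ℝ] HS μ := blockDiag A A

/-- The Dirac operator `D(φ,ψ) = (Kψ, Lφ)` associated with the pair `(K, L)`. -/
def dirac (K L : E μ →L[ℝ] E μ) : HS μ →L[ℝ] HS μ := blockAntidiag K L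

/-- The commutator `[D, π(A)]`. -/
def commD (K L A : E μ →L[ℝ] E μ) : HS μ →L[ℝ] HS μ :=
  (dirac K L).comp (diagRep A) - (diagRep A).comp (dirac K L)

/-- The rank-one orthogonal projection onto the span of the unit vector `ψ`:
`φ ↦ ⟪ψ, φ⟫ • ψ`. -/
def rankOneProj (ψ : E μ) : E μ →L[ℝ] E μ := (innerSL ℝ ψ).smulRight ψ

/-- The Haar-basis element `e_w = 2^{ℓ(w)/2} (χ_{[w1]} - χ_{[w0]})`, as a function on `Ω`. -/
def haarFun (w : List Bool) : Ω → ℝ := fun x =>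
  (2 : ℝ) ^ ((w.length : ℝ) / 2) *
    ((cylinder (w ++ [true])).indicator 1 x - (cylinder (w ++ [false])).indicator 1 x)

lemma continuous_shiftMap : Continuous shiftMap :=
  continuous_pi fun n => continuous_apply (n + 1)

lemma continuous_consSeq (a : Bool) : Continuous (consSeq a) := by
  apply continuous_pi
  intro n
  cases n with
  | zero => exact continuous_const
  | succ k => exact continuous_apply k

/-- The Koopman operator on continuous functions: `f ↦ f ∘ σ`. -/
def koopmanC (f : C(Ω, ℝ)) : C(Ω, ℝ) := f.comp ⟨shiftMap, continuous_shiftMap⟩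

/-- The Ruelle operator on continuous functions: `(Lf)(x) = (f(0x) + f(1x))/2`. -/
def ruelleC (f : C(Ω, ℝ)) : C(Ω, ℝ) :=
  ⟨fun x => (f (consSeq false x) + f (consSeq true x)) / 2,
    ((f.continuous.comp (continuous_consSeq false)).add
      (f.continuous.comp (continuous_consSeq true))).div_const 2⟩

end

/-!
The Bernoulli measure is shift-invariant, so `K` is an isometry, and
`[K, M_f] g = (f ∘ σ - f) · (g ∘ σ)` gives `‖[K, M_f]‖ ≤ |Kf - f|_∞`. Since `M_f` is
self-adjoint and `L = K*`, the commutator `[L, M_f] = -[K, M_f]*` has the same norm. Finally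
`[D, π(M_f)]` is the antidiagonal block operator with entries `[K, M_f]` and `[L, M_f]`, so its
norm is at most the larger of theirs.
-/

namespace ShiftSpace

lemma mem_cylinder {w : List Bool} {x : Ω} :
    x ∈ _root_.cylinder w ↔ ∀ (n : ℕ) (h : n < w.length), x n = w[n] :=
  ⟨fun hx n h => hx ⟨n, h⟩, fun hx i => hx i i.isLt⟩

lemma cylinder_nil : cylinder [] = Set.univ := by
  ext x; simp [mem_cylinder]

lemma measurableSet_cylinder (w : List Bool) : MeasurableSet (cylinder w) := by
  have : cylinder w = ⋂ i : Fin w.length, (fun x : Ω => x i) ⁻¹' {w.get i} := by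
    ext x; simp [_root_.cylinder, Set.mem_iInter]
  rw [this]
  exact .iInter fun i => measurable_pi_apply _ (measurableSet_singleton _)

lemma setOf_apply_eq_eq_iUnion_cylinder (i : ℕ) (b : Bool) :
    {x : Ω | x i = b} = ⋃ w ∈ {w : List Bool | w.length = i}, cylinder (w ++ [b]) := by
  ext x
  simp only [Set.mem_ofPred_eq, Set.mem_iUnion, mem_cylinder, exists_prop]
  constructor
  · intro hx
    refine ⟨List.ofFn fun j : Fin i => x j, List.length_ofFn, fun n hn => ?_⟩
    simp only [List.length_append, List.length_ofFn, List.length_singleton] at hn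
    rcases Nat.lt_succ_iff_lt_or_eq.mp hn with hn | rfl
    · simp [List.getElem_append_left, hn]
    · simpa using hx
  · rintro ⟨w, rfl, hx⟩
    simpa using hx w.length (by simp)

lemma generateFrom_range_cylinder :
    MeasurableSpace.generateFrom (Set.range cylinder) = (inferInstance : MeasurableSpace Ω) := by
  refine le_antisymm (MeasurableSpace.generateFrom_le ?_) (iSup_le fun i => ?_)
  · rintro _ ⟨w, rfl⟩
    exact measurableSet_cylinder w
  · rw [← measurable_iff_comap_le]
    refine @measurable_to_countable' Bool Ω _ _ (MeasurableSpace.generateFrom _) _ fun b => ?_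
    simp only [Set.preimage, Set.mem_singleton_iff]
    rw [setOf_apply_eq_eq_iUnion_cylinder]
    exact .biUnion (Set.to_countable _)
      fun w _ => MeasurableSpace.measurableSet_generateFrom ⟨w ++ [b], rfl⟩

lemma isPiSystem_range_cylinder : IsPiSystem (Set.range cylinder) := by
  have nested : ∀ w v : List Bool, w.length ≤ v.length →
      (cylinder w ∩ cylinder v).Nonempty → cylinder w ∩ cylinder v = cylinder v := by
    rintro w v hle ⟨z, hzw, hzv⟩
    refine Set.inter_eq_self_of_subset_right fun y hy => ?_
    rw [mem_cylinder] at *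
    intro n hn
    rw [hy n (by omega), ← hzv n (by omega), hzw n hn]
  rintro _ ⟨w, rfl⟩ _ ⟨v, rfl⟩ hne
  rcases le_total w.length v.length with h | h
  · exact ⟨v, (nested w v h hne).symm⟩
  · rw [Set.inter_comm] at hne ⊢
    exact ⟨w, (nested v w h hne).symm⟩

lemma measurable_shiftMap : Measurable shiftMap :=
  continuous_shiftMap.measurable

lemma shiftMap_preimage_cylinder (w : List Bool) :
    shiftMap ⁻¹' cylinder w = cylinder (false :: w) ∪ cylinder (true :: w) := by
  ext x
  simp only [Set.mem_preimage, Set.mem_union, mem_cylinder]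
  constructor
  · intro hx
    have step : ∀ n (hn : n < (x 0 :: w).length), x n = (x 0 :: w)[n]
      | 0, _ => rfl
      | k + 1, hn => hx k (by simpa using hn)
    cases h0 : x 0 <;> rw [h0] at step
    exacts [.inl step, .inr step]
  · rintro (hx | hx) <;> exact fun n hn => hx (n + 1) (by simpa using hn)

lemma disjoint_cylinder_false_true (w : List Bool) :
    Disjoint (cylinder (false :: w)) (cylinder (true :: w)) :=
  Set.disjoint_left.mpr fun x hf ht => by
    simpa using (hf ⟨0, by simp⟩).symm.trans (ht ⟨0, by simp⟩)

theorem measurePreserving_shiftMap {μ : Measure Ω}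
    (hμ : ∀ w : List Bool, μ (cylinder w) = (1 / 2) ^ w.length) :
    MeasurePreserving shiftMap μ μ := by
  have : IsFiniteMeasure μ := ⟨by simp [← cylinder_nil, hμ]⟩
  refine ⟨measurable_shiftMap, ext_of_generate_finite _ generateFrom_range_cylinder.symm
    isPiSystem_range_cylinder ?_ ?_⟩
  · rintro _ ⟨w, rfl⟩
    rw [Measure.map_apply measurable_shiftMap (measurableSet_cylinder w),
      shiftMap_preimage_cylinder, measure_union (disjoint_cylinder_false_true w)
        (measurableSet_cylinder _), hμ, hμ, hμ]
    simp only [List.length_cons, pow_succ, ← mul_add, ENNReal.add_halves, mul_one]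
  · rw [Measure.map_apply measurable_shiftMap .univ, Set.preimage_univ]

end ShiftSpace

section Commutator

variable {α : Type*} [MeasurableSpace α] {μ : Measure α} {p : ℝ≥0∞} [Fact (1 ≤ p)]

theorem norm_koopman_comp_mul_sub_le {T : α → α} (hT : MeasurePreserving T μ μ)
    {K M : Lp ℝ p μ →L[ℝ] Lp ℝ p μ} (hK : ∀ g : Lp ℝ p μ, K g =ᵐ[μ] fun x => g (T x))
    {f : α → ℝ} (hM : ∀ g : Lp ℝ p μ, M g =ᵐ[μ] fun x => f x * g x)
    {c : ℝ} (hc : 0 ≤ c) (hf : ∀ x, |f (T x) - f x| ≤ c) :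
    ‖K ∘L M - M ∘L K‖ ≤ c := by
  refine opNorm_le_bound _ hc fun g => ?_
  have hcomm : ⇑((K ∘L M - M ∘L K) g) =ᵐ[μ] fun x => (f (T x) - f x) * g (T x) := by
    filter_upwards [Lp.coeFn_sub (K (M g)) (M (K g)), hK (M g), hM (K g), hK g,
      hT.quasiMeasurePreserving.ae (hM g)] with x hsub hKM hMK hKg hMg
    simp only [sub_apply, comp_apply, hsub, Pi.sub_apply, hKM, hMK, hKg, hMg]
    ring
  calc ‖(K ∘L M - M ∘L K) g‖ ≤ c * ‖Lp.compMeasurePreserving T hT g‖ := by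
        refine Lp.norm_le_mul_norm_of_ae_le_mul ?_
        filter_upwards [hcomm, Lp.coeFn_compMeasurePreserving g hT] with x hx hTg
        rw [hx, hTg, norm_mul, Real.norm_eq_abs, Function.comp_apply]
        exact mul_le_mul_of_nonneg_right (hf x) (norm_nonneg _)
    _ = c * ‖g‖ := by rw [Lp.norm_compMeasurePreserving]

theorem isSelfAdjoint_of_ae_eq_mul {M : Lp ℝ 2 μ →L[ℝ] Lp ℝ 2 μ} {f : α → ℝ}
    (hM : ∀ g : Lp ℝ 2 μ, M g =ᵐ[μ] fun x => f x * g x) : IsSelfAdjoint M := by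
  refine isSelfAdjoint_iff'.mpr ((eq_adjoint_iff M M).mpr fun g h => ?_).symm
  rw [L2.inner_def, L2.inner_def]
  refine integral_congr_ae ?_
  filter_upwards [hM g, hM h] with x hg hh
  simp only [hg, hh, RCLike.inner_apply, conj_trivial]
  ring

end Commutator

theorem norm_adjoint_comp_sub_comp {H : Type*} [NormedAddCommGroup H] [InnerProductSpace ℝ H]
    [CompleteSpace H] (K : H →L[ℝ] H) {A : H →L[ℝ] H} (hA : IsSelfAdjoint A) :
    ‖adjoint K ∘L A - A ∘L adjoint K‖ = ‖K ∘L A - A ∘L K‖ := by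
  rw [← LinearIsometryEquiv.norm_map adjoint (K ∘L A - A ∘L K), map_sub, adjoint_comp,
    adjoint_comp, hA.adjoint_eq, ← norm_neg, neg_sub]

section Block

variable {μ : Measure Ω}

lemma commD_eq_blockAntidiag (K L A : E μ →L[ℝ] E μ) :
    commD K L A = blockAntidiag (K ∘L A - A ∘L K) (L ∘L A - A ∘L L) := by
  ext v
  simp only [commD, dirac, diagRep, blockDiag, blockAntidiag]
  rfl

lemma norm_blockAntidiag_le {A₁ A₂ : E μ →L[ℝ] E μ} {c : ℝ} (h₁ : ‖A₁‖ ≤ c) (h₂ : ‖A₂‖ ≤ c) :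
    ‖blockAntidiag A₁ A₂‖ ≤ c := by
  have hc : 0 ≤ c := (norm_nonneg _).trans h₁
  refine opNorm_le_bound _ hc fun v => ?_
  have hsnd : ‖A₁ v.snd‖ ≤ c * ‖v.snd‖ := A₁.le_of_opNorm_le h₁ v.snd
  have hfst : ‖A₂ v.fst‖ ≤ c * ‖v.fst‖ := A₂.le_of_opNorm_le h₂ v.fst
  refine (pow_le_pow_iff_left₀ (norm_nonneg _) (by positivity) two_ne_zero).mp ?_
  calc ‖blockAntidiag A₁ A₂ v‖ ^ 2 = ‖A₁ v.snd‖ ^ 2 + ‖A₂ v.fst‖ ^ 2 :=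
        WithLp.prod_norm_sq_eq_of_L2 _
    _ ≤ (c * ‖v.snd‖) ^ 2 + (c * ‖v.fst‖) ^ 2 := by gcongr
    _ = (c * ‖v‖) ^ 2 := by rw [mul_pow c ‖v‖, WithLp.prod_norm_sq_eq_of_L2]; ring

end Block

theorem stmt16_general
    (μ : Measure Ω)
    (hμ : ∀ w : List Bool, μ (cylinder w) = (1 / 2) ^ w.length)
    (K L : E μ →L[ℝ] E μ)
    (hK : ∀ g : E μ, (K g : Ω → ℝ) =ᵐ[μ] fun x => g (shiftMap x))
    (hadj : ContinuousLinearMap.adjoint K = L)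
    (f : C(Ω, ℝ)) (Mf : E μ →L[ℝ] E μ)
    (hMf : ∀ g : E μ, (Mf g : Ω → ℝ) =ᵐ[μ] fun x => f x * g x)
    (h : ‖koopmanC f - f‖ ≤ 1) :
    ‖commD K L Mf‖ ≤ 1 := by
  have hK_comm : ‖K ∘L Mf - Mf ∘L K‖ ≤ 1 :=
    norm_koopman_comp_mul_sub_le (ShiftSpace.measurePreserving_shiftMap hμ) hK hMf zero_le_one
      fun x => ((koopmanC f - f).norm_coe_le_norm x).trans h
  have hL_comm : ‖L ∘L Mf - Mf ∘L L‖ ≤ 1 := by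
    rwa [← hadj, norm_adjoint_comp_sub_comp K (isSelfAdjoint_of_ae_eq_mul hMf)]
  rw [commD_eq_blockAntidiag]
  exact norm_blockAntidiag_le hK_comm hL_comm

/-- If `|Kf − f|_∞ ≤ 1` then `‖[D, π(M_f)]‖ ≤ 1`. -/
theorem stmt16
    (μ : Measure Ω) [IsProbabilityMeasure μ]
    (hμ : ∀ w : List Bool, μ (cylinder w) = (1 / 2) ^ w.length)
    (K L : E μ →L[ℝ] E μ)
    (hK : ∀ g : E μ, (K g : Ω → ℝ) =ᵐ[μ] fun x => g (shiftMap x))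
    (hL : ∀ g : E μ, (L g : Ω → ℝ) =ᵐ[μ]
      fun x => (g (consSeq false x) + g (consSeq true x)) / 2)
    (hadj : ContinuousLinearMap.adjoint K = L)
    (f : C(Ω, ℝ)) (Mf : E μ →L[ℝ] E μ)
    (hMf : ∀ g : E μ, (Mf g : Ω → ℝ) =ᵐ[μ] fun x => f x * g x)
    (h : ‖koopmanC f - f‖ ≤ 1) :
    ‖commD K L Mf‖ ≤ 1 :=
  stmt16_general μ hμ K L hK hadj f Mf hMf h
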